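/- Open/Close lemma for heap refinement: given a predicate definition predicate p(x̄) = a, for every concrete heap h_c, semiconcrete heap h, and argument list v̄, we have h_c ◁ h ⊎ {[p(v̄)]} if and only if there exist a store s' and a heap h' with (0[x̄ := v̄], h') →[a]_c (s', 0) and h_c ◁ h ⊎ h'. -/
import Mathlib


/- ## Syntax of the programming language and of assertions; semiconcrete states -/

/-- Integer expressions. -/
inductive IExp (V : Type) where
  | lit (z : ℤ)
  | var (x : V)
  | add (e₁ e₂ : IExp V)
  | sub (e₁ e₂ : IExp V)

/-- Boolean expressions. -/
inductive BExp (V : Type) where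
  | eq (e₁ e₂ : IExp V)
  | lt (e₁ e₂ : IExp V)
  | not (b : BExp V)

/-- Evaluation of an integer expression under a store. -/
def IExp.eval {V : Type} (s : V → ℤ) : IExp V → ℤ
  | .lit z => z
  | .var x => s x
  | .add e₁ e₂ => e₁.eval s + e₂.eval s
  | .sub e₁ e₂ => e₁.eval s - e₂.eval s

/-- Evaluation of a boolean expression under a store. -/
def BExp.eval {V : Type} (s : V → ℤ) : BExp V → Bool
  | .eq e₁ e₂ => decide (e₁.eval s = e₂.eval s)
  | .lt e₁ e₂ => decide (e₁.eval s < e₂.eval s)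
  | .not b => !(b.eval s)

/-- Predicate names: the built-in points-to and malloc-block predicates, plus
user-defined predicates drawn from `P`. -/
inductive PredName (P : Type) where
  | pts
  | mb
  | user (q : P)
deriving DecidableEq

/-- A chunk `p(v̄)`: a predicate name together with its integer arguments. -/
abbrev Chunk (P : Type) := PredName P × List ℤ

/-- A heap: a multiset of chunks. -/
abbrev Heap (P : Type) := Multiset (Chunk P)

/-- A (semiconcrete) state: a store paired with a heap. -/
abbrev SCState (V P : Type) := (V → ℤ) × Heap P

/-- Function update `f[x := v]`. -/
def updF {V α : Type} [DecidableEq V] (s : V → α) (x : V) (v : α) : V → α :=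
  fun y => if y = x then v else s y

/-- Function update by lists, `f[x̄ := v̄]`. -/
def updsF {V α : Type} [DecidableEq V] : (V → α) → List V → List α → (V → α)
  | s, [], _ => s
  | s, _ :: _, [] => s
  | s, x :: xs, v :: vs => updsF (updF s x v) xs vs

/-- Assertions: boolean expressions, predicate assertions with variable patterns,
separating conjunction, and conditional assertions. -/
inductive Assn (V P : Type) where
  | bexp (b : BExp V)
  | pred (p : PredName P) (es : List (IExp V)) (xs : List V)
  | star (a₁ a₂ : Assn V P)
  | ite (b : BExp V) (a₁ a₂ : Assn V P)

/- ## Consumption and production arrows -/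

/-- The consumption arrow `(s, h) →[a]_c (s', h')`. -/
inductive ConsArrow {V P : Type} [DecidableEq V] :
    SCState V P → Assn V P → SCState V P → Prop where
  | bexp {s : V → ℤ} {h : Heap P} {b : BExp V} :
      b.eval s = true → ConsArrow (s, h) (.bexp b) (s, h)
  | pred {s : V → ℤ} {h h' : Heap P} {p : PredName P} {es : List (IExp V)}
      {xs : List V} {vs : List ℤ} :
      vs.length = xs.length →
      h = (p, es.map (IExp.eval s) ++ vs) ::ₘ h' →
      ConsArrow (s, h) (.pred p es xs) (updsF s xs vs, h')
  | star {σ σ' σ'' : SCState V P} {a₁ a₂ : Assn V P} :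
      ConsArrow σ a₁ σ' → ConsArrow σ' a₂ σ'' → ConsArrow σ (.star a₁ a₂) σ''
  | iteTrue {s : V → ℤ} {h : Heap P} {b : BExp V} {a₁ a₂ : Assn V P} {σ' : SCState V P} :
      b.eval s = true → ConsArrow (s, h) a₁ σ' → ConsArrow (s, h) (.ite b a₁ a₂) σ'
  | iteFalse {s : V → ℤ} {h : Heap P} {b : BExp V} {a₁ a₂ : Assn V P} {σ' : SCState V P} :
      b.eval s = false → ConsArrow (s, h) a₂ σ' → ConsArrow (s, h) (.ite b a₁ a₂) σ'

/-- The production arrow `(s, h) →[a]_p (s', h')`. -/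
inductive ProdArrow {V P : Type} [DecidableEq V] :
    SCState V P → Assn V P → SCState V P → Prop where
  | bexp {s : V → ℤ} {h : Heap P} {b : BExp V} :
      b.eval s = true → ProdArrow (s, h) (.bexp b) (s, h)
  | pred {s : V → ℤ} {h h' : Heap P} {p : PredName P} {es : List (IExp V)}
      {xs : List V} {vs : List ℤ} :
      vs.length = xs.length →
      h' = (p, es.map (IExp.eval s) ++ vs) ::ₘ h →
      ProdArrow (s, h) (.pred p es xs) (updsF s xs vs, h')
  | star {σ σ' σ'' : SCState V P} {a₁ a₂ : Assn V P} :
      ProdArrow σ a₁ σ' → ProdArrow σ' a₂ σ'' → ProdArrow σ (.star a₁ a₂) σ''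
  | iteTrue {s : V → ℤ} {h : Heap P} {b : BExp V} {a₁ a₂ : Assn V P} {σ' : SCState V P} :
      b.eval s = true → ProdArrow (s, h) a₁ σ' → ProdArrow (s, h) (.ite b a₁ a₂) σ'
  | iteFalse {s : V → ℤ} {h : Heap P} {b : BExp V} {a₁ a₂ : Assn V P} {σ' : SCState V P} :
      b.eval s = false → ProdArrow (s, h) a₂ σ' → ProdArrow (s, h) (.ite b a₁ a₂) σ'

/- ## Heap refinement -/

/-- A heap is concrete if all its chunks have built-in predicate names. -/
def concreteHeap {P : Type} (h : Heap P) : Prop :=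
  ∀ α ∈ h, α.1 = PredName.pts ∨ α.1 = PredName.mb

/-- Heap refinement `h_c ◁ h`: the semiconcrete heap `h` can be obtained from the
concrete heap `h_c` by closing finitely many user-defined predicate chunks. -/
inductive Refines {V P : Type} [DecidableEq V] (pdef : P → List V × Assn V P) :
    Heap P → Heap P → Prop where
  | refl (h : Heap P) : concreteHeap h → Refines pdef h h
  | close {hc h : Heap P} {q : P} {vs : List ℤ} {s' : V → ℤ} :
      Refines pdef hc h →
      ConsArrow (updsF (fun _ => (0 : ℤ)) (pdef q).1 vs, h) (pdef q).2 (s', 0) →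
      Refines pdef hc ((PredName.user q, vs) ::ₘ 0)
  | union {hc h hc' h' : Heap P} :
      Refines pdef hc h → Refines pdef hc' h' → Refines pdef (hc + hc') (h + h')

/-- Decomposition of an equality of multiset sums. -/
lemma add_single {α : Type} (h : Multiset α) (c : α) : h + (c ::ₘ 0) = c ::ₘ h := by
  rw [Multiset.add_cons]; simp

lemma multiset_split {α : Type} :
    ∀ (u : Multiset α) (s t v : Multiset α), s + t = u + v →
      ∃ a b c d, s = a + b ∧ t = c + d ∧ u = a + c ∧ v = b + d := by
  intro u
  induction u using Multiset.induction with
  | empty =>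
      intro s t v hst
      exact ⟨0, s, 0, t, by simp, by simp, by simp, by simpa using hst.symm⟩
  | cons x u' ih =>
      intro s t v hst
      have hx : x ∈ s + t := by
        rw [hst]; simp
      rcases Multiset.mem_add.mp hx with hxs | hxt
      · obtain ⟨s', rfl⟩ := Multiset.exists_cons_of_mem hxs
        have h' : s' + t = u' + v := by
          have : x ::ₘ (s' + t) = x ::ₘ (u' + v) := by
            simpa [Multiset.cons_add] using hst
          exact (Multiset.cons_inj_right x).mp this
        obtain ⟨a, b, c, d, h1, h2, h3, h4⟩ := ih s' t v h'
        exact ⟨x ::ₘ a, b, c, d, by simp [h1, Multiset.cons_add],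
          h2, by simp [h3, Multiset.cons_add], h4⟩
      · obtain ⟨t', rfl⟩ := Multiset.exists_cons_of_mem hxt
        have h' : s + t' = u' + v := by
          have : x ::ₘ (s + t') = x ::ₘ (u' + v) := by
            calc x ::ₘ (s + t') = s + (x ::ₘ t') := by
                  rw [Multiset.add_cons]
              _ = x ::ₘ (u' + v) := by simpa [Multiset.cons_add] using hst
          exact (Multiset.cons_inj_right x).mp this
        obtain ⟨a, b, c, d, h1, h2, h3, h4⟩ := ih s t' v h'
        exact ⟨a, b, x ::ₘ c, d, h1, by simp [h2, Multiset.cons_add],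
          by rw [h3, Multiset.add_cons], h4⟩

/-- Refinement splits along a decomposition of the semiconcrete heap. -/
lemma refines_split {V P : Type} [DecidableEq V]
    (pdef : P → List V × Assn V P) {hc H : Heap P}
    (hr : Refines pdef hc H) :
    ∀ h₁ h₂ : Heap P, H = h₁ + h₂ →
      ∃ hc₁ hc₂, hc = hc₁ + hc₂ ∧ Refines pdef hc₁ h₁ ∧ Refines pdef hc₂ h₂ := by
  induction hr with
  | refl h hcc =>
      intro h₁ h₂ hEq
      subst hEq
      exact ⟨h₁, h₂, rfl,
        .refl h₁ (fun α hα => hcc α (Multiset.mem_add.mpr (Or.inl hα))),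
        .refl h₂ (fun α hα => hcc α (Multiset.mem_add.mpr (Or.inr hα)))⟩
  | @close hc' h' q vs s' hr' harr ih =>
      intro h₁ h₂ hEq
      have hcard : Multiset.card h₁ + Multiset.card h₂ = 1 := by
        have := congrArg Multiset.card hEq
        simpa [Multiset.card_add] using this.symm
      rcases Nat.eq_zero_or_pos (Multiset.card h₁) with h0 | hpos
      · have h₁0 : h₁ = 0 := Multiset.card_eq_zero.mp h0
        subst h₁0
        have h₂eq : h₂ = (PredName.user q, vs) ::ₘ 0 := by simpa using hEq.symm
        subst h₂eq
        exact ⟨0, hc', by simp, .refl 0 (by intro α hα; simp at hα),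
          .close hr' harr⟩
      · have h₂0 : h₂ = 0 := by
          have : Multiset.card h₂ = 0 := by omega
          exact Multiset.card_eq_zero.mp this
        subst h₂0
        have h₁eq : h₁ = (PredName.user q, vs) ::ₘ 0 := by simpa using hEq.symm
        subst h₁eq
        exact ⟨hc', 0, by simp, .close hr' harr,
          .refl 0 (by intro α hα; simp at hα)⟩
  | @union hc₁ hA hc₂ hB hr₁ hr₂ ih₁ ih₂ =>
      intro h₁ h₂ hEq
      obtain ⟨a, b, c, d, hA1, hA2, hA3, hA4⟩ :=
        multiset_split h₁ hA hB h₂ (by rw [hEq])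
      obtain ⟨ha1, ha2, hEa, hra1, hra2⟩ := ih₁ a b hA1
      obtain ⟨hb1, hb2, hEb, hrb1, hrb2⟩ := ih₂ c d hA2
      refine ⟨ha1 + hb1, ha2 + hb2, ?_, ?_, ?_⟩
      · rw [hEa, hEb]; ac_rfl
      · rw [hA3]; exact .union hra1 hrb1
      · rw [hA4]; exact .union hra2 hrb2

/-- Opening a user-defined predicate chunk in a refinement. -/
lemma refines_open_aux {V P : Type} [DecidableEq V]
    (pdef : P → List V × Assn V P) {hc H : Heap P}
    (hr : Refines pdef hc H) :
    ∀ (q : P) (vs : List ℤ) (h : Heap P), H = h + ((PredName.user q, vs) ::ₘ 0) →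
      ∃ (s' : V → ℤ) (h' : Heap P),
        ConsArrow (updsF (fun _ => (0 : ℤ)) (pdef q).1 vs, h') (pdef q).2 (s', 0) ∧
          Refines pdef hc (h + h') := by
  induction hr with
  | refl hh hcc =>
      intro q vs h hEq
      exfalso
      have hmem : ((PredName.user q, vs) : Chunk P) ∈ hh := by
        rw [hEq]
        exact Multiset.mem_add.mpr (Or.inr (Multiset.mem_cons_self _ _))
      rcases hcc _ hmem with h1 | h1 <;> simp at h1
  | @close hc' h₀ q' vs' s' hr' harr ih =>
      intro q vs h hEq
      rw [add_single] at hEq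
      have h0 : h = 0 := by
        have := congrArg Multiset.card hEq
        simp at this
        exact this
      subst h0
      have h2 : ((PredName.user q', vs') ::ₘ (0 : Heap P)) =
          (PredName.user q, vs) ::ₘ 0 := by simpa using hEq
      simp at h2
      obtain ⟨hq', hvs'⟩ := h2
      subst hq'; subst hvs'
      exact ⟨s', h₀, harr, by simpa using hr'⟩
  | @union hc₁ hA hc₂ hB hr₁ hr₂ ih₁ ih₂ =>
      intro q vs h hEq
      rw [add_single] at hEq
      have hmem : ((PredName.user q, vs) : Chunk P) ∈ hA + hB := by
        rw [hEq]; simp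
      rcases Multiset.mem_add.mp hmem with hm | hm
      · obtain ⟨hA', rfl⟩ := Multiset.exists_cons_of_mem hm
        have hh : h = hA' + hB := by
          have h2 : (PredName.user q, vs) ::ₘ h =
              (PredName.user q, vs) ::ₘ (hA' + hB) := by
            rw [← hEq, Multiset.cons_add]
          exact (Multiset.cons_inj_right _).mp h2
        obtain ⟨s', h', harr, hr''⟩ := ih₁ q vs hA' (by rw [add_single])
        refine ⟨s', h', harr, ?_⟩
        have hu := Refines.union hr'' hr₂
        have hre : hA' + h' + hB = h + h' := by rw [hh]; ac_rfl
        rwa [hre] at hu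
      · obtain ⟨hB', rfl⟩ := Multiset.exists_cons_of_mem hm
        have hh : h = hA + hB' := by
          have h2 : (PredName.user q, vs) ::ₘ h =
              (PredName.user q, vs) ::ₘ (hA + hB') := by
            rw [← hEq, Multiset.add_cons]
          exact (Multiset.cons_inj_right _).mp h2
        obtain ⟨s', h', harr, hr''⟩ := ih₂ q vs hB' (by rw [add_single])
        refine ⟨s', h', harr, ?_⟩
        have hu := Refines.union hr₁ hr''
        have hre : hA + (hB' + h') = h + h' := by rw [hh]; ac_rfl
        rwa [hre] at hu

/-- the Open/Close lemma for heap refinement. -/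
theorem refines_open_close {V P : Type} [DecidableEq V] [DecidableEq P]
    (pdef : P → List V × Assn V P) (hc h : Heap P) (q : P) (vs : List ℤ)
    (hconc : concreteHeap hc) :
    Refines pdef hc (h + ((PredName.user q, vs) ::ₘ 0)) ↔
      ∃ (s' : V → ℤ) (h' : Heap P),
        ConsArrow (updsF (fun _ => (0 : ℤ)) (pdef q).1 vs, h') (pdef q).2 (s', 0) ∧
          Refines pdef hc (h + h') := by
  constructor
  · intro hr
    exact refines_open_aux pdef hr q vs h rfl
  · rintro ⟨s', h', harr, hr⟩
    obtain ⟨hc₁, hc₂, hEq, hr₁, hr₂⟩ := refines_split pdef hr h h' rfl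
    rw [hEq]
    exact Refines.union hr₁ (Refines.close hr₂ harr)
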